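/- arXiv:2404.17219 — 4 statements merged into one kernel-verified Lean document; each statement's English description precedes it below -/
import Mathlib

section
/- Let T be a closed densely defined unbounded operator between real Hilbert spaces H and K, and let α > 0 be such that ‖Tu‖_K ≥ α‖u‖_H for all u ∈ D(T). Then for every v ∈ D(T*) that is orthogonal to the kernel of T* (that is, ⟨v, w⟩_K = 0 for all w ∈ ker T*), one has ‖T*v‖_H ≥ α‖v‖_K. -/
open scoped LinearPMap RealInnerProductSpace

/-- Let `T` be a closed densely defined unbounded operator between real Hilbert spaces `H`, `K`
with `‖Tu‖ ≥ α‖u‖` for all `u ∈ D(T)`, where `α > 0`.  Then for every `v ∈ D(T*)` orthogonal to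
the kernel of `T*` one has `‖T*v‖ ≥ α‖v‖`. -/
theorem adjoint_boundedBelow_on_orthogonal_of_boundedBelow
    {H K : Type*}
    [NormedAddCommGroup H] [InnerProductSpace ℝ H] [CompleteSpace H]
    [NormedAddCommGroup K] [InnerProductSpace ℝ K] [CompleteSpace K]
    (T : H →ₗ.[ℝ] K)
    (hTdense : Dense (T.domain : Set H))
    (hTclosed : T.IsClosed)
    (α : ℝ) (hα : 0 < α)
    (hbound : ∀ u : T.domain, α * ‖(u : H)‖ ≤ ‖T u‖) :
    ∀ v : T.adjoint.domain,
      (∀ (w : K) (hw : w ∈ T.adjoint.domain), T.adjoint ⟨w, hw⟩ = 0 → ⟪(v : K), w⟫ = 0) →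
      α * ‖(v : K)‖ ≤ ‖T.adjoint v‖ := by
  intro v hv
  set R : Submodule ℝ K := LinearMap.range T.toFun with hRdef
  -- The range of `T` is closed, since `T` is closed and bounded below.
  have hRclosed : IsClosed (R : Set K) := by
    apply IsSeqClosed.isClosed
    intro y z hy hz
    choose u hu using hy
    -- `u` is Cauchy since `T` is bounded below
    have hucauchy : CauchySeq fun n => (u n : H) := by
      rw [Metric.cauchySeq_iff]
      intro ε hε
      obtain ⟨N, hN⟩ := (Metric.cauchySeq_iff).mp hz.cauchySeq (α * ε) (by positivity)
      refine ⟨N, fun m hm n hn => ?_⟩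
      have key : α * ‖(u m : H) - (u n : H)‖ ≤ ‖y m - y n‖ := by
        have h1 := hbound (u m - u n)
        have h2 : T (u m - u n) = y m - y n := by
          rw [T.map_sub, ← hu m, ← hu n]; rfl
        rw [h2] at h1
        simpa using h1
      have hd := hN m hm n hn
      rw [dist_eq_norm] at hd ⊢
      nlinarith [norm_nonneg ((u m : H) - (u n : H))]
    obtain ⟨x, hx⟩ := cauchySeq_tendsto_of_complete hucauchy
    have hgraph : ∀ n, ((u n : H), y n) ∈ T.graph := by
      intro n
      rw [← hu n]
      exact T.mem_graph (u n)
    have htend : Filter.Tendsto (fun n => ((u n : H), y n)) Filter.atTop (nhds (x, z)) :=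
      hx.prodMk_nhds hz
    have hmem : (x, z) ∈ T.graph :=
      hTclosed.mem_of_tendsto htend (Filter.Eventually.of_forall hgraph)
    rw [LinearPMap.mem_graph_iff] at hmem
    obtain ⟨w, -, hw2⟩ := hmem
    exact ⟨w, hw2⟩
  -- `v` lies in the double orthogonal complement of `R`, hence in `R` itself.
  have hvR : (v : K) ∈ R := by
    have hmem : (v : K) ∈ Rᗮᗮ := by
      rw [Submodule.mem_orthogonal]
      intro w hw
      -- `w ∈ Rᗮ` belongs to the adjoint domain and `T† w = 0`.
      have hz0 : ∀ x : T.domain, ⟪w, T x⟫ = 0 := fun x => by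
        rw [real_inner_comm]
        exact Submodule.mem_orthogonal _ _ |>.mp hw (T x) ⟨x, rfl⟩
      have hwd : w ∈ T.adjoint.domain := by
        apply LinearPMap.mem_adjoint_domain_of_exists
        refine ⟨0, fun x => ?_⟩
        rw [inner_zero_left, hz0 x]
      have hw0 : T.adjoint ⟨w, hwd⟩ = 0 := by
        apply LinearPMap.adjoint_apply_eq hTdense
        intro x
        simp only [inner_zero_left, Submodule.coe_mk]
        exact (hz0 x).symm
      have := hv w hwd hw0
      rwa [real_inner_comm] at this
    rwa [Submodule.orthogonal_orthogonal_eq_closure,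
      hRclosed.submodule_topologicalClosure_eq] at hmem
  obtain ⟨u, hu⟩ : ∃ u : T.domain, T u = (v : K) := hvR
  -- Main estimate
  have hform : ⟪T.adjoint v, (u : H)⟫ = ⟪(v : K), T u⟫ :=
    LinearPMap.adjoint_isFormalAdjoint hTdense v u
  rw [hu, real_inner_self_eq_norm_sq] at hform
  have hCS : ⟪T.adjoint v, (u : H)⟫ ≤ ‖T.adjoint v‖ * ‖(u : H)‖ := real_inner_le_norm _ _
  have hub : α * ‖(u : H)‖ ≤ ‖(v : K)‖ := by
    have := hbound u
    rwa [hu] at this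
  rcases eq_or_ne ‖(v : K)‖ 0 with h0 | h0
  · rw [h0]
    simp [norm_nonneg (T.adjoint v)]

  · have hpos : 0 < ‖(v : K)‖ := lt_of_le_of_ne (norm_nonneg _) (Ne.symm h0)
    nlinarith [norm_nonneg (T.adjoint v), norm_nonneg ((u : H))]
end

section
/- Let T be a closed densely defined unbounded operator between real Hilbert spaces H and K with ‖Tu‖_K ≥ α‖u‖_H for all u ∈ D(T) and some α > 0, and let Q be the orthogonal projection of K onto ker T*. Let ℓ : D(T*) → ℝ be a linear functional for which there exists C ≥ 0 with |ℓ(Ψ)| ≤ C (‖Ψ‖_K² + ‖T*Ψ‖_H²)^{1/2} for all Ψ ∈ D(T*). Then there exists a unique Φ_b ∈ D(T*) such that for all Ψ ∈ D(T*): ⟨QΦ_b, Ψ⟩_K + ⟨T*Φ_b, T*Ψ⟩_H = ℓ(Ψ). -/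
/-!
Since `T*` is closed, `D(T*)` with the graph norm is a Hilbert space (the graph of `T*` in
`K ⊕₂ H`), and the lifting problem is Lax–Milgram for the form
`⟨QΦ, Ψ⟩ + ⟨T*Φ, T*Ψ⟩`. Its coercivity is the abstract Poincaré inequality: `Ψ - QΨ` is
orthogonal to `ker T* ⊇ (range T)ᗮ`, so it lies in the closure of `range T`, where the lower
bound `α‖u‖ ≤ ‖Tu‖` dualizes to `α‖Ψ - QΨ‖ ≤ ‖T*Ψ‖`. With Pythagoras this gives
`‖Ψ‖² + ‖T*Ψ‖² ≤ (1 + α⁻²)(‖QΨ‖² + ‖T*Ψ‖²)`.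
-/

open scoped LinearPMap RealInnerProductSpace

section OrthogonalProjection

variable {K : Type*} [NormedAddCommGroup K] [InnerProductSpace ℝ K] {N : Submodule ℝ K}
  {Q : K → K}

theorem real_inner_apply_self_eq_norm_sq (hQmem : ∀ w, Q w ∈ N) (hQorth : ∀ w, w - Q w ∈ Nᗮ)
    (w : K) : ⟪Q w, w⟫ = ‖Q w‖ ^ 2 := by
  have h : ⟪Q w, w - Q w⟫ = 0 := (Submodule.mem_orthogonal _ _).mp (hQorth w) _ (hQmem w)
  rwa [inner_sub_right, real_inner_self_eq_norm_sq, sub_eq_zero] at h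

theorem norm_sq_eq_norm_sq_add_norm_sq_sub (hQmem : ∀ w, Q w ∈ N) (hQorth : ∀ w, w - Q w ∈ Nᗮ)
    (w : K) : ‖w‖ ^ 2 = ‖Q w‖ ^ 2 + ‖w - Q w‖ ^ 2 := by
  have h := norm_add_sq_eq_norm_sq_add_norm_sq_real
    ((Submodule.mem_orthogonal _ _).mp (hQorth w) _ (hQmem w))
  rw [add_sub_cancel] at h
  simpa only [sq] using h

end OrthogonalProjection

theorem IsCoercive.existsUnique_eq {V : Type*} [NormedAddCommGroup V] [InnerProductSpace ℝ V]
    [CompleteSpace V] {B : V →L[ℝ] V →L[ℝ] ℝ} (hB : IsCoercive B) (ℓ : V →L[ℝ] ℝ) :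
    ∃! v : V, ∀ w, B v w = ℓ w := by
  set A := hB.continuousLinearEquivOfBilin
  set u := (InnerProductSpace.toDual ℝ V).symm ℓ
  have hsolves (v : V) : (∀ w, B v w = ℓ w) ↔ A v = u := by
    simp only [← hB.continuousLinearEquivOfBilin_apply, A, u,
      ← InnerProductSpace.toDual_symm_apply]
    exact ⟨ext_inner_right ℝ, fun h w => by rw [h]⟩
  simp only [hsolves]
  exact ⟨A.symm u, A.apply_symm_apply u, fun v hv => by rw [← hv, A.symm_apply_apply]⟩

namespace LinearPMap

section GraphL2

variable {𝕜 E F : Type*} [RCLike 𝕜] [NormedAddCommGroup E] [InnerProductSpace 𝕜 E]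
  [NormedAddCommGroup F] [InnerProductSpace 𝕜 F] (f : E →ₗ.[𝕜] F)

def graphL2 : Submodule 𝕜 (WithLp 2 (E × F)) :=
  f.graph.comap (WithLp.linearEquiv 2 𝕜 (E × F)).toLinearMap

theorem IsClosed.isClosed_graphL2 {f : E →ₗ.[𝕜] F} (hf : f.IsClosed) :
    _root_.IsClosed (f.graphL2 : Set (WithLp 2 (E × F))) :=
  hf.preimage (WithLp.prod_continuous_ofLp 2 E F)

noncomputable def graphL2Equiv : f.domain ≃ₗ[𝕜] f.graphL2 :=
  LinearEquiv.ofBijective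
    (LinearMap.codRestrict f.graphL2
      ((WithLp.linearEquiv 2 𝕜 (E × F)).symm.toLinearMap ∘ₗ f.domain.subtype.prod f.toFun)
      fun x => f.mem_graph x)
    ⟨fun x y h => Subtype.ext congr(WithLp.fst $(congrArg Subtype.val h)),
     fun ⟨p, hp⟩ => by
      obtain ⟨x, hx₁, hx₂⟩ := f.mem_graph_iff.mp hp
      exact ⟨x, Subtype.ext (WithLp.ofLp_injective 2 (Prod.ext hx₁ hx₂))⟩⟩

theorem norm_graphL2Equiv (x : f.domain) :
    ‖f.graphL2Equiv x‖ = √(‖(x : E)‖ ^ 2 + ‖f x‖ ^ 2) :=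
  WithLp.prod_norm_eq_of_L2 _

end GraphL2

section LaxMilgram

variable {E F : Type*} [NormedAddCommGroup E] [InnerProductSpace ℝ E] [CompleteSpace E]
  [NormedAddCommGroup F] [InnerProductSpace ℝ F] [CompleteSpace F]

theorem IsClosed.existsUnique_add_inner_eq {f : E →ₗ.[ℝ] F} (hf : f.IsClosed)
    (a : E →L[ℝ] E →L[ℝ] ℝ) {c : ℝ} (hc : 0 < c)
    (ha : ∀ x : f.domain, c * (‖(x : E)‖ ^ 2 + ‖f x‖ ^ 2) ≤ a x x + ‖f x‖ ^ 2)
    (ℓ : f.domain →ₗ[ℝ] ℝ) (C : ℝ)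
    (hℓ : ∀ x : f.domain, |ℓ x| ≤ C * √(‖(x : E)‖ ^ 2 + ‖f x‖ ^ 2)) :
    ∃! x : f.domain, ∀ y : f.domain, a x y + ⟪f x, f y⟫ = ℓ y := by
  have : CompleteSpace f.graphL2 := hf.isClosed_graphL2.completeSpace_coe
  set e := f.graphL2Equiv
  let fstG : f.graphL2 →L[ℝ] E := WithLp.fstL 2 ℝ E F ∘L f.graphL2.subtypeL
  let sndG : f.graphL2 →L[ℝ] F := WithLp.sndL 2 ℝ E F ∘L f.graphL2.subtypeL
  let B : f.graphL2 →L[ℝ] f.graphL2 →L[ℝ] ℝ :=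
    a.bilinearComp fstG fstG +
      ((innerSL ℝ).bilinearComp sndG sndG : f.graphL2 →L[ℝ] f.graphL2 →L[ℝ] ℝ)
  have hB (x y : f.domain) : B (e x) (e y) = a x y + ⟪f x, f y⟫ := rfl
  let ℓG : f.graphL2 →L[ℝ] ℝ := (ℓ ∘ₗ e.symm.toLinearMap).mkContinuous C fun g => by
    obtain ⟨x, rfl⟩ := e.surjective g
    rw [norm_graphL2Equiv]
    simpa using hℓ x
  have hℓG (y : f.domain) : ℓG (e y) = ℓ y := by simp [ℓG]
  have hcoercive : IsCoercive B := ⟨c, hc, fun g => by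
    obtain ⟨x, rfl⟩ := e.surjective g
    rw [hB, real_inner_self_eq_norm_sq, mul_assoc, ← sq, norm_graphL2Equiv,
      Real.sq_sqrt (by positivity)]
    exact ha x⟩
  refine (e.toEquiv.existsUnique_congr fun x => ?_).mpr (hcoercive.existsUnique_eq ℓG)
  rw [← e.toEquiv.forall_congr_right]
  simp [hB, hℓG]

end LaxMilgram

section Adjoint

variable {H K : Type*} [NormedAddCommGroup H] [InnerProductSpace ℝ H] [CompleteSpace H]
  [NormedAddCommGroup K] [InnerProductSpace ℝ K] {T : H →ₗ.[ℝ] K}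

theorem exists_adjoint_eq_zero_of_mem_orthogonal_range (hT : Dense (T.domain : Set H)) {w : K}
    (hw : w ∈ (LinearMap.range T.toFun)ᗮ) : ∃ hw' : w ∈ T†.domain, T† ⟨w, hw'⟩ = 0 := by
  have hzero (u : T.domain) : ⟪(0 : H), (u : H)⟫ = ⟪w, T u⟫ := by
    rw [inner_zero_left, real_inner_comm]
    exact ((Submodule.mem_orthogonal _ w).mp hw _ (LinearMap.mem_range_self _ u)).symm
  have hdom : w ∈ T†.domain := T.mem_adjoint_domain_of_exists w ⟨0, hzero⟩
  exact ⟨hdom, T.adjoint_apply_eq hT ⟨w, hdom⟩ hzero⟩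

theorem mul_norm_le_norm_adjoint_of_orthogonal_ker [CompleteSpace K]
    (hT : Dense (T.domain : Set H)) {α : ℝ} (hα : 0 ≤ α)
    (hbound : ∀ u : T.domain, α * ‖(u : H)‖ ≤ ‖T u‖) {Ψ : T†.domain}
    (hΨ : ∀ w : T†.domain, T† w = 0 → ⟪(w : K), Ψ⟫ = 0) : α * ‖(Ψ : K)‖ ≤ ‖T† Ψ‖ := by
  have hclosure : (Ψ : K) ∈ _root_.closure (LinearMap.range T.toFun : Set K) := by
    rw [← Submodule.topologicalClosure_coe, ← Submodule.orthogonal_orthogonal_eq_closure]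
    intro w hw
    obtain ⟨hw', hw₀⟩ := exists_adjoint_eq_zero_of_mem_orthogonal_range hT hw
    exact hΨ ⟨w, hw'⟩ hw₀
  have hclosure_bound : ∀ w ∈ _root_.closure (LinearMap.range T.toFun : Set K),
      α * ⟪(Ψ : K), w⟫ ≤ ‖T† Ψ‖ * ‖w‖ := by
    refine fun w hw => closure_minimal (t := {w | α * ⟪(Ψ : K), w⟫ ≤ ‖T† Ψ‖ * ‖w‖}) ?_
      (isClosed_le (by fun_prop) (by fun_prop)) hw
    rintro _ ⟨u, rfl⟩
    calc α * ⟪(Ψ : K), T u⟫ = α * ⟪T† Ψ, (u : H)⟫ := by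
          rw [T.adjoint_isFormalAdjoint hT Ψ u]
      _ ≤ α * (‖T† Ψ‖ * ‖(u : H)‖) := by gcongr; exact real_inner_le_norm _ _
      _ ≤ ‖T† Ψ‖ * ‖T u‖ := by
          rw [mul_left_comm]; gcongr; exact hbound u
  have h := hclosure_bound Ψ hclosure
  rw [real_inner_self_eq_norm_sq, sq, ← mul_assoc] at h
  rcases (norm_nonneg (Ψ : K)).eq_or_lt with hzero | hpos
  · simp [← hzero]
  · exact le_of_mul_le_mul_right h hpos

theorem norm_sq_add_norm_adjoint_sq_le [CompleteSpace K] (hT : Dense (T.domain : Set H)) {α : ℝ}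
    (hα : 0 < α) (hbound : ∀ u : T.domain, α * ‖(u : H)‖ ≤ ‖T u‖) {N : Submodule ℝ K}
    (hN : ∀ w : K, w ∈ N ↔ ∃ hw : w ∈ T†.domain, T† ⟨w, hw⟩ = 0) {Q : K → K}
    (hQmem : ∀ w, Q w ∈ N) (hQorth : ∀ w, w - Q w ∈ Nᗮ) (Ψ : T†.domain) :
    ‖(Ψ : K)‖ ^ 2 + ‖T† Ψ‖ ^ 2 ≤ (1 + α⁻¹ ^ 2) * (‖Q Ψ‖ ^ 2 + ‖T† Ψ‖ ^ 2) := by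
  obtain ⟨hQΨ, hQΨ₀⟩ := (hN _).mp (hQmem Ψ)
  have hperp : α * ‖(Ψ : K) - Q Ψ‖ ≤ ‖T† Ψ‖ := by
    have h := mul_norm_le_norm_adjoint_of_orthogonal_ker hT hα.le hbound (Ψ := Ψ - ⟨Q Ψ, hQΨ⟩)
      fun w hw => (Submodule.mem_orthogonal _ _).mp (hQorth Ψ) w ((hN w).mpr ⟨w.2, hw⟩)
    rwa [map_sub, hQΨ₀, sub_zero] at h
  have hperp_sq : ‖(Ψ : K) - Q Ψ‖ ^ 2 ≤ α⁻¹ ^ 2 * ‖T† Ψ‖ ^ 2 := by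
    rw [← mul_pow]
    gcongr
    rwa [le_inv_mul_iff₀ hα]
  have hpyth := norm_sq_eq_norm_sq_add_norm_sq_sub hQmem hQorth (Ψ : K)
  nlinarith [sq_nonneg α⁻¹, sq_nonneg ‖Q Ψ‖]

end Adjoint

end LinearPMap

theorem lifting_problem_unique_solution_general
    {H K : Type*}
    [NormedAddCommGroup H] [InnerProductSpace ℝ H] [CompleteSpace H]
    [NormedAddCommGroup K] [InnerProductSpace ℝ K] [CompleteSpace K]
    (T : H →ₗ.[ℝ] K)
    (hTdense : Dense (T.domain : Set H))
    (α : ℝ) (hα : 0 < α)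
    (hbound : ∀ u : T.domain, α * ‖(u : H)‖ ≤ ‖T u‖)
    (N : Submodule ℝ K)
    (hN : ∀ w : K, w ∈ N ↔ ∃ hw : w ∈ T.adjoint.domain, T.adjoint ⟨w, hw⟩ = 0)
    (Q : K →L[ℝ] K)
    (hQmem : ∀ w : K, Q w ∈ N)
    (hQorth : ∀ w : K, w - Q w ∈ Nᗮ)
    (ℓ : T.adjoint.domain →ₗ[ℝ] ℝ)
    (C : ℝ)
    (hℓ : ∀ Ψ : T.adjoint.domain,
      |ℓ Ψ| ≤ C * Real.sqrt (‖(Ψ : K)‖ ^ 2 + ‖T.adjoint Ψ‖ ^ 2)) :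
    ∃! Φb : T.adjoint.domain,
      ∀ Ψ : T.adjoint.domain,
        ⟪Q (Φb : K), (Ψ : K)⟫ + ⟪T.adjoint Φb, T.adjoint Ψ⟫ = ℓ Ψ := by
  refine (LinearPMap.adjoint_isClosed hTdense).existsUnique_add_inner_eq
    ((innerSL ℝ : K →L[ℝ] K →L[ℝ] ℝ) ∘L Q) (c := (1 + α⁻¹ ^ 2)⁻¹) (by positivity)
    (fun Ψ => ?_) ℓ C hℓ
  rw [ContinuousLinearMap.comp_apply, innerSL_apply_apply,
    real_inner_apply_self_eq_norm_sq hQmem hQorth, inv_mul_le_iff₀ (by positivity)]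
  exact LinearPMap.norm_sq_add_norm_adjoint_sq_le hTdense hα hbound hN hQmem hQorth Ψ

/-- **Unique solvability of the lifting problem** (equation (eq:V:Lift) of the paper, via
Lax–Milgram).  Let `T` be a closed densely defined unbounded operator between real Hilbert
spaces `H`, `K` with `‖Tu‖ ≥ α‖u‖` for all `u ∈ D(T)`, `α > 0`, and let `Q` be the orthogonal
projection of `K` onto `N = ker T*`.  If `ℓ` is a linear functional on `D(T*)` bounded for the
graph norm, then there is a unique `Φ_b ∈ D(T*)` with
`⟨QΦ_b, Ψ⟩ + ⟨T*Φ_b, T*Ψ⟩ = ℓ(Ψ)` for all `Ψ ∈ D(T*)`. -/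
theorem lifting_problem_unique_solution
    {H K : Type*}
    [NormedAddCommGroup H] [InnerProductSpace ℝ H] [CompleteSpace H]
    [NormedAddCommGroup K] [InnerProductSpace ℝ K] [CompleteSpace K]
    (T : H →ₗ.[ℝ] K)
    (hTdense : Dense (T.domain : Set H))
    (hTclosed : T.IsClosed)
    (α : ℝ) (hα : 0 < α)
    (hbound : ∀ u : T.domain, α * ‖(u : H)‖ ≤ ‖T u‖)
    (N : Submodule ℝ K)
    (hN : ∀ w : K, w ∈ N ↔ ∃ hw : w ∈ T.adjoint.domain, T.adjoint ⟨w, hw⟩ = 0)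
    (Q : K →L[ℝ] K)
    (hQmem : ∀ w : K, Q w ∈ N)
    (hQorth : ∀ w : K, w - Q w ∈ Nᗮ)
    (ℓ : T.adjoint.domain →ₗ[ℝ] ℝ)
    (C : ℝ) (hC : 0 ≤ C)
    (hℓ : ∀ Ψ : T.adjoint.domain,
      |ℓ Ψ| ≤ C * Real.sqrt (‖(Ψ : K)‖ ^ 2 + ‖T.adjoint Ψ‖ ^ 2)) :
    ∃! Φb : T.adjoint.domain,
      ∀ Ψ : T.adjoint.domain,
        ⟪Q (Φb : K), (Ψ : K)⟫ + ⟪T.adjoint Φb, T.adjoint Ψ⟫ = ℓ Ψ :=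
  lifting_problem_unique_solution_general T hTdense α hα hbound N hN Q hQmem hQorth ℓ C hℓ
end

section
/- Let H and K be real Hilbert spaces and let S be a closed densely defined unbounded operator from H to K. Let f : ℝ → H be continuous and let Φ : ℝ → H be twice continuously differentiable such that for every t: Φ(t) ∈ D(S) and Φ'(t) ∈ D(S), the map t ↦ S(Φ(t)) is differentiable with derivative S(Φ'(t)), and for all ψ ∈ D(S): ⟨Φ''(t), ψ⟩_H + ⟨S(Φ(t)), Sψ⟩_K = ⟨f(t), ψ⟩_H. Then the energy E(t) := (1/2)‖Φ'(t)‖_H² + (1/2)‖S(Φ(t))‖_K² satisfies, for all t ≥ 0: E(t) − E(0) = ∫₀ᵗ ⟨f(s), Φ'(s)⟩_H ds. -/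
open scoped LinearPMap RealInnerProductSpace

/-! Testing the weak equation at time `t` with `ψ = Φ'(t)` shows that the energy has derivative
`⟪f(t), Φ'(t)⟫`; the identity is then the fundamental theorem of calculus. -/

section

variable {E F : Type*} [NormedAddCommGroup E] [InnerProductSpace ℝ E]
  [NormedAddCommGroup F] [InnerProductSpace ℝ F]

theorem HasDerivAt.half_norm_sq_add_half_norm_sq {v : ℝ → E} {w : ℝ → F} {v' : E} {w' : F}
    {t : ℝ} (hv : HasDerivAt v v' t) (hw : HasDerivAt w w' t) :
    HasDerivAt (fun s => (1 / 2) * ‖v s‖ ^ 2 + (1 / 2) * ‖w s‖ ^ 2) (⟪v t, v'⟫ + ⟪w t, w'⟫) t :=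
  ((hv.norm_sq.const_mul (1 / 2)).add (hw.norm_sq.const_mul (1 / 2))).congr_deriv (by ring)

end

namespace LinearPMap

variable {H K : Type*} [NormedAddCommGroup H] [InnerProductSpace ℝ H]
  [NormedAddCommGroup K] [InnerProductSpace ℝ K]

noncomputable def waveEnergy (S : H →ₗ.[ℝ] K) (Φ : ℝ → H) (hmem : ∀ t, Φ t ∈ S.domain)
    (t : ℝ) : ℝ :=
  (1 / 2) * ‖deriv Φ t‖ ^ 2 + (1 / 2) * ‖S ⟨Φ t, hmem t⟩‖ ^ 2

theorem hasDerivAt_waveEnergy (S : H →ₗ.[ℝ] K) {Φ : ℝ → H} {t : ℝ}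
    (hmem : ∀ t, Φ t ∈ S.domain) (hmem' : deriv Φ t ∈ S.domain)
    (hΦ' : DifferentiableAt ℝ (deriv Φ) t)
    (hSderiv : HasDerivAt (fun s => S ⟨Φ s, hmem s⟩) (S ⟨deriv Φ t, hmem'⟩) t) :
    HasDerivAt (S.waveEnergy Φ hmem)
      (⟪deriv (deriv Φ) t, deriv Φ t⟫ + ⟪S ⟨Φ t, hmem t⟩, S ⟨deriv Φ t, hmem'⟩⟫) t := by
  rw [real_inner_comm]
  exact hΦ'.hasDerivAt.half_norm_sq_add_half_norm_sq hSderiv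

end LinearPMap

theorem abstract_wave_energy_identity_general
    {H K : Type*}
    [NormedAddCommGroup H] [InnerProductSpace ℝ H]
    [NormedAddCommGroup K] [InnerProductSpace ℝ K]
    (S : H →ₗ.[ℝ] K)
    (f : ℝ → H) (hf : Continuous f)
    (Φ : ℝ → H) (hΦ : ContDiff ℝ 2 Φ)
    (hmem : ∀ t, Φ t ∈ S.domain)
    (hmem' : ∀ t, deriv Φ t ∈ S.domain)
    (hSderiv : ∀ t, HasDerivAt (fun s => S ⟨Φ s, hmem s⟩) (S ⟨deriv Φ t, hmem' t⟩) t)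
    (heq : ∀ t, ∀ ψ : S.domain,
      ⟪deriv (deriv Φ) t, (ψ : H)⟫ + ⟪S ⟨Φ t, hmem t⟩, S ψ⟫ = ⟪f t, (ψ : H)⟫) :
    ∀ t : ℝ, 0 ≤ t →
      ((1 / 2) * ‖deriv Φ t‖ ^ 2 + (1 / 2) * ‖S ⟨Φ t, hmem t⟩‖ ^ 2) -
        ((1 / 2) * ‖deriv Φ 0‖ ^ 2 + (1 / 2) * ‖S ⟨Φ 0, hmem 0⟩‖ ^ 2) =
      ∫ s in (0 : ℝ)..t, ⟪f s, deriv Φ s⟫ := by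
  intro t _
  have hΦ' : ContDiff ℝ 1 (deriv Φ) := (contDiff_succ_iff_deriv.mp hΦ).2.2
  have hE : ∀ s, HasDerivAt (S.waveEnergy Φ hmem) ⟪f s, deriv Φ s⟫ s := fun s =>
    (S.hasDerivAt_waveEnergy hmem (hmem' s) (hΦ'.differentiable one_ne_zero s)
      (hSderiv s)).congr_deriv (heq s ⟨deriv Φ s, hmem' s⟩)
  have hpower : Continuous fun s => ⟪f s, deriv Φ s⟫ := hf.inner hΦ'.continuous
  exact (intervalIntegral.integral_eq_sub_of_hasDerivAt (fun s _ => hE s)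
    (hpower.intervalIntegrable 0 t)).symm

/-- **Energy identity** (identity (eq:P:Energy) of the paper, for strong solutions).
Let `S` be a closed densely defined unbounded operator from a real Hilbert space `H` to a real
Hilbert space `K`, `f : ℝ → H` continuous, and `Φ : ℝ → H` a twice continuously differentiable
curve with `Φ(t), Φ'(t) ∈ D(S)`, such that `t ↦ S(Φ(t))` is differentiable with derivative
`S(Φ'(t))` and `⟨Φ''(t), ψ⟩ + ⟨S Φ(t), S ψ⟩ = ⟨f(t), ψ⟩` for all `ψ ∈ D(S)`.  Then the energy
`E(t) = ½‖Φ'(t)‖² + ½‖S Φ(t)‖²` satisfies `E(t) - E(0) = ∫₀ᵗ ⟨f(s), Φ'(s)⟩ ds` for `t ≥ 0`. -/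
theorem abstract_wave_energy_identity
    {H K : Type*}
    [NormedAddCommGroup H] [InnerProductSpace ℝ H] [CompleteSpace H]
    [NormedAddCommGroup K] [InnerProductSpace ℝ K] [CompleteSpace K]
    (S : H →ₗ.[ℝ] K)
    (hSdense : Dense (S.domain : Set H))
    (hSclosed : S.IsClosed)
    (f : ℝ → H) (hf : Continuous f)
    (Φ : ℝ → H) (hΦ : ContDiff ℝ 2 Φ)
    (hmem : ∀ t, Φ t ∈ S.domain)
    (hmem' : ∀ t, deriv Φ t ∈ S.domain)
    (hSderiv : ∀ t, HasDerivAt (fun s => S ⟨Φ s, hmem s⟩) (S ⟨deriv Φ t, hmem' t⟩) t)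
    (heq : ∀ t, ∀ ψ : S.domain,
      ⟪deriv (deriv Φ) t, (ψ : H)⟫ + ⟪S ⟨Φ t, hmem t⟩, S ψ⟫ = ⟪f t, (ψ : H)⟫) :
    ∀ t : ℝ, 0 ≤ t →
      ((1 / 2) * ‖deriv Φ t‖ ^ 2 + (1 / 2) * ‖S ⟨Φ t, hmem t⟩‖ ^ 2) -
        ((1 / 2) * ‖deriv Φ 0‖ ^ 2 + (1 / 2) * ‖S ⟨Φ 0, hmem 0⟩‖ ^ 2) =
      ∫ s in (0 : ℝ)..t, ⟪f s, deriv Φ s⟫ :=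
  abstract_wave_energy_identity_general S f hf Φ hΦ hmem hmem' hSderiv heq
end

section
/- Let H and K be real Hilbert spaces and let S be a closed densely defined unbounded operator from H to K. Let Φ : ℝ → H be twice continuously differentiable such that for every t: Φ(t) ∈ D(S) and Φ'(t) ∈ D(S), the map t ↦ S(Φ(t)) is differentiable with derivative S(Φ'(t)), and for all ψ ∈ D(S): ⟨Φ''(t), ψ⟩_H + ⟨S(Φ(t)), Sψ⟩_K = 0. If Φ(0) = 0 and Φ'(0) = 0, then Φ(t) = 0 for all t ≥ 0. -/
open scoped LinearPMap RealInnerProductSpace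

/-!
Testing the equation against `ψ = Φ'(t)` shows that the energy `‖Φ'(t)‖² + ‖S Φ(t)‖²` has zero
derivative, so it keeps its initial value `0`. Hence `Φ' ≡ 0`, and `Φ` is constant, equal to
`Φ(0) = 0`.
-/

theorem norm_sq_add_norm_sq_eq_of_inner_add_inner_eq_zero
    {E F : Type*} [NormedAddCommGroup E] [InnerProductSpace ℝ E]
    [NormedAddCommGroup F] [InnerProductSpace ℝ F]
    {u u' : ℝ → E} {w w' : ℝ → F}
    (hu : ∀ t, HasDerivAt u (u' t) t) (hw : ∀ t, HasDerivAt w (w' t) t)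
    (horth : ∀ t, ⟪u t, u' t⟫ + ⟪w t, w' t⟫ = 0) (s t : ℝ) :
    ‖u s‖ ^ 2 + ‖w s‖ ^ 2 = ‖u t‖ ^ 2 + ‖w t‖ ^ 2 := by
  have hderiv : ∀ t, HasDerivAt (fun t => ‖u t‖ ^ 2 + ‖w t‖ ^ 2) 0 t := fun t => by
    have := (hu t).norm_sq.add (hw t).norm_sq
    rwa [← mul_add, horth t, mul_zero] at this
  exact is_const_of_deriv_eq_zero (fun t => (hderiv t).differentiableAt)
    (fun t => (hderiv t).deriv) s t

theorem abstract_wave_uniqueness_general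
    {H K : Type*}
    [NormedAddCommGroup H] [InnerProductSpace ℝ H]
    [NormedAddCommGroup K] [InnerProductSpace ℝ K]
    (S : H →ₗ.[ℝ] K)
    (Φ : ℝ → H) (hΦ : ContDiff ℝ 2 Φ)
    (hmem : ∀ t, Φ t ∈ S.domain)
    (hmem' : ∀ t, deriv Φ t ∈ S.domain)
    (hSderiv : ∀ t, HasDerivAt (fun s => S ⟨Φ s, hmem s⟩) (S ⟨deriv Φ t, hmem' t⟩) t)
    (heq : ∀ t, ∀ ψ : S.domain,
      ⟪deriv (deriv Φ) t, (ψ : H)⟫ + ⟪S ⟨Φ t, hmem t⟩, S ψ⟫ = 0)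
    (h0 : Φ 0 = 0) (h0' : deriv Φ 0 = 0) :
    ∀ t : ℝ, 0 ≤ t → Φ t = 0 := by
  have hS0 : S ⟨Φ 0, hmem 0⟩ = 0 := by
    convert S.map_zero
    exact h0
  have henergy (t : ℝ) : ‖deriv Φ t‖ ^ 2 + ‖S ⟨Φ t, hmem t⟩‖ ^ 2 = 0 := by
    have hconst := norm_sq_add_norm_sq_eq_of_inner_add_inner_eq_zero
      (fun t => (hΦ.differentiable_deriv_two t).hasDerivAt) hSderiv
      (fun t => by simpa only [real_inner_comm] using heq t ⟨deriv Φ t, hmem' t⟩) t 0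
    simpa [h0', hS0] using hconst
  have hvel (t : ℝ) : deriv Φ t = 0 := by
    have : ‖deriv Φ t‖ ^ 2 = 0 := by nlinarith [henergy t, sq_nonneg ‖S ⟨Φ t, hmem t⟩‖]
    simpa using this
  intro t _
  rw [is_const_of_deriv_eq_zero (hΦ.differentiable (by norm_num)) hvel t 0, h0]

/-- **Uniqueness for the abstract homogeneous wave equation** (strong-solution form of the
paper's uniqueness theorem).  Let `S` be a closed densely defined unbounded operator from a real
Hilbert space `H` to a real Hilbert space `K`, and `Φ : ℝ → H` a twice continuously
differentiable curve with `Φ(t), Φ'(t) ∈ D(S)`, such that `t ↦ S(Φ(t))` is differentiable with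
derivative `S(Φ'(t))` and `⟨Φ''(t), ψ⟩ + ⟨S Φ(t), S ψ⟩ = 0` for all `ψ ∈ D(S)`.  If
`Φ(0) = 0` and `Φ'(0) = 0`, then `Φ(t) = 0` for all `t ≥ 0`. -/
theorem abstract_wave_uniqueness
    {H K : Type*}
    [NormedAddCommGroup H] [InnerProductSpace ℝ H] [CompleteSpace H]
    [NormedAddCommGroup K] [InnerProductSpace ℝ K] [CompleteSpace K]
    (S : H →ₗ.[ℝ] K)
    (hSdense : Dense (S.domain : Set H))
    (hSclosed : S.IsClosed)
    (Φ : ℝ → H) (hΦ : ContDiff ℝ 2 Φ)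
    (hmem : ∀ t, Φ t ∈ S.domain)
    (hmem' : ∀ t, deriv Φ t ∈ S.domain)
    (hSderiv : ∀ t, HasDerivAt (fun s => S ⟨Φ s, hmem s⟩) (S ⟨deriv Φ t, hmem' t⟩) t)
    (heq : ∀ t, ∀ ψ : S.domain,
      ⟪deriv (deriv Φ) t, (ψ : H)⟫ + ⟪S ⟨Φ t, hmem t⟩, S ψ⟫ = 0)
    (h0 : Φ 0 = 0) (h0' : deriv Φ 0 = 0) :
    ∀ t : ℝ, 0 ≤ t → Φ t = 0 :=
  abstract_wave_uniqueness_general S Φ hΦ hmem hmem' hSderiv heq h0 h0'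
end
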